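/- arXiv:2502.09537 — 4 statements merged into one kernel-verified Lean document; each statement's English description precedes it below -/
import Mathlib

section
/- Let M be a positive integer, let D be a symmetric M × M real matrix, and let κ₁, κ₂, μ, γ be real constants. Suppose p, q, u, v : ℝ → ℝ^M are differentiable and satisfy, for all t, the semi-discrete Klein–Gordon–Schrödinger system: p′ = −(κ₁/2) D q − γ (u ∘ q), q′ = (κ₁/2) D p + γ (u ∘ p), u′ = v, v′ = κ₂ D u − μ² u + γ (p ∘ p + q ∘ q), where ∘ denotes the componentwise (Hadamard) product. Then the semi-discrete energy E_h(p,q,u,v) = (1/2)(−κ₁ pᵀDp − κ₁ qᵀDq − κ₂ uᵀDu + vᵀv + μ² uᵀu) − γ (p∘p + q∘q)ᵀ u is constant in t. -/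
/-!
Along any curve, the time derivative of the energy pairs each velocity with a partial gradient:
`E' = -p'·(κ₁ D p + 2γ u∘p) - q'·(κ₁ D q + 2γ u∘q) + v'·v - u'·(κ₂ D u - μ² u + γ (p∘p + q∘q))`
(symmetry of `D` turns `d/dt (x·Dx)` into `2 x'·Dx`). The equations of motion say that these
gradients are `2q'`, `-2p'` and `v'`, and that `u' = v`, so the four terms cancel in pairs:
`-2 p'·q' + 2 q'·p' + v'·v - v·v' = 0`.
-/

open Matrix

section Calculus

variable {𝕜 ι : Type*} [NontriviallyNormedField 𝕜] [Fintype ι]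

theorem HasDerivAt.dotProduct {f g : 𝕜 → ι → 𝕜} {f' g' : ι → 𝕜} {t : 𝕜}
    (hf : HasDerivAt f f' t) (hg : HasDerivAt g g' t) :
    HasDerivAt (fun t => f t ⬝ᵥ g t) (f' ⬝ᵥ g t + f t ⬝ᵥ g') t := by
  simpa [_root_.dotProduct, Finset.sum_add_distrib] using
    HasDerivAt.fun_sum fun i (_ : i ∈ Finset.univ) =>
      (hasDerivAt_pi.mp hf i).fun_mul (hasDerivAt_pi.mp hg i)

theorem HasDerivAt.mulVec (A : Matrix ι ι 𝕜) {f : 𝕜 → ι → 𝕜} {f' : ι → 𝕜} {t : 𝕜}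
    (hf : HasDerivAt f f' t) : HasDerivAt (fun t => A *ᵥ f t) (A *ᵥ f') t :=
  hasDerivAt_pi.mpr fun i => by
    simpa [Matrix.mulVec] using (hasDerivAt_const t (A i)).dotProduct hf

theorem dotProduct_mulVec_comm_of_transpose_eq {A : Matrix ι ι 𝕜} (hA : Aᵀ = A) (x y : ι → 𝕜) :
    x ⬝ᵥ A *ᵥ y = y ⬝ᵥ A *ᵥ x := by
  rw [dotProduct_mulVec, ← mulVec_transpose, hA, dotProduct_comm]

theorem HasDerivAt.dotProduct_mulVec_self {A : Matrix ι ι 𝕜} (hA : Aᵀ = A) {f : 𝕜 → ι → 𝕜}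
    {f' : ι → 𝕜} {t : 𝕜} (hf : HasDerivAt f f' t) :
    HasDerivAt (fun t => f t ⬝ᵥ A *ᵥ f t) (2 * (f' ⬝ᵥ A *ᵥ f t)) t := by
  convert hf.dotProduct (hf.mulVec A) using 1
  rw [dotProduct_mulVec_comm_of_transpose_eq hA (f t), two_mul]

theorem HasDerivAt.dotProduct_self {f : 𝕜 → ι → 𝕜} {f' : ι → 𝕜} {t : 𝕜} (hf : HasDerivAt f f' t) :
    HasDerivAt (fun t => f t ⬝ᵥ f t) (2 * (f' ⬝ᵥ f t)) t := by
  convert hf.dotProduct hf using 1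
  rw [dotProduct_comm (f t), two_mul]

end Calculus

section KleinGordonSchrodinger

variable {ι : Type*} [Fintype ι] {D : Matrix ι ι ℝ} {κ₁ κ₂ μ γ : ℝ}

noncomputable def kgsEnergy (D : Matrix ι ι ℝ) (κ₁ κ₂ μ γ : ℝ) (p q u v : ι → ℝ) : ℝ :=
  (1 / 2) * (-(κ₁ * (p ⬝ᵥ D *ᵥ p)) - κ₁ * (q ⬝ᵥ D *ᵥ q) - κ₂ * (u ⬝ᵥ D *ᵥ u) + v ⬝ᵥ v
      + μ ^ 2 * (u ⬝ᵥ u)) - γ * ((p * p + q * q) ⬝ᵥ u)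

theorem hasDerivAt_kgsEnergy (hD : Dᵀ = D) {p q u v : ℝ → ι → ℝ} {p' q' u' v' : ι → ℝ} {t : ℝ}
    (hp : HasDerivAt p p' t) (hq : HasDerivAt q q' t) (hu : HasDerivAt u u' t)
    (hv : HasDerivAt v v' t) :
    HasDerivAt (fun t => kgsEnergy D κ₁ κ₂ μ γ (p t) (q t) (u t) (v t))
      (-(p' ⬝ᵥ (κ₁ • D *ᵥ p t + (2 * γ) • (u t * p t)))
        - q' ⬝ᵥ (κ₁ • D *ᵥ q t + (2 * γ) • (u t * q t)) + v' ⬝ᵥ v t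
        - u' ⬝ᵥ (κ₂ • D *ᵥ u t - μ ^ 2 • u t + γ • (p t * p t + q t * q t))) t := by
  have hcoupling : HasDerivAt (fun t => (p t * p t + q t * q t) ⬝ᵥ u t)
      (2 * (p' ⬝ᵥ (u t * p t)) + 2 * (q' ⬝ᵥ (u t * q t)) + u' ⬝ᵥ (p t * p t + q t * q t)) t := by
    refine (((hp.fun_mul hp).add (hq.fun_mul hq)).dotProduct hu).congr_deriv ?_
    simp only [dotProduct, Pi.add_apply, Pi.mul_apply, Finset.mul_sum, ← Finset.sum_add_distrib]
    exact Finset.sum_congr rfl fun i _ => by ring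
  have hE := ((((((hp.dotProduct_mulVec_self hD).const_mul κ₁).neg.sub
    ((hq.dotProduct_mulVec_self hD).const_mul κ₁)).sub
    ((hu.dotProduct_mulVec_self hD).const_mul κ₂)).add hv.dotProduct_self).add
    (hu.dotProduct_self.const_mul (μ ^ 2))).const_mul (1 / 2) |>.sub (hcoupling.const_mul γ)
  refine hE.congr_deriv ?_
  simp only [dotProduct_add, dotProduct_sub, dotProduct_smul, smul_eq_mul]
  ring

end KleinGordonSchrodinger

theorem semidiscrete_KGS_energy_conservation_general (M : ℕ)
    (D : Matrix (Fin M) (Fin M) ℝ) (hD : D.transpose = D)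
    (κ₁ κ₂ μ γ : ℝ)
    (p q u v : ℝ → (Fin M → ℝ))
    (hp : Differentiable ℝ p) (hq : Differentiable ℝ q)
    (hu : Differentiable ℝ u) (hv : Differentiable ℝ v)
    (hpe : ∀ t, deriv p t = -(κ₁ / 2) • D.mulVec (q t) - γ • (u t * q t))
    (hqe : ∀ t, deriv q t = (κ₁ / 2) • D.mulVec (p t) + γ • (u t * p t))
    (hue : ∀ t, deriv u t = v t)
    (hve : ∀ t, deriv v t = κ₂ • D.mulVec (u t) - (μ ^ 2) • u t + γ • (p t * p t + q t * q t)) :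
    ∀ s t : ℝ,
      (1 / 2) * (-(κ₁ * (p s ⬝ᵥ D.mulVec (p s))) - κ₁ * (q s ⬝ᵥ D.mulVec (q s))
          - κ₂ * (u s ⬝ᵥ D.mulVec (u s)) + v s ⬝ᵥ v s + μ ^ 2 * (u s ⬝ᵥ u s))
        - γ * ((p s * p s + q s * q s) ⬝ᵥ u s)
      = (1 / 2) * (-(κ₁ * (p t ⬝ᵥ D.mulVec (p t))) - κ₁ * (q t ⬝ᵥ D.mulVec (q t))
          - κ₂ * (u t ⬝ᵥ D.mulVec (u t)) + v t ⬝ᵥ v t + μ ^ 2 * (u t ⬝ᵥ u t))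
        - γ * ((p t * p t + q t * q t) ⬝ᵥ u t) := by
  have hE : ∀ t, HasDerivAt (fun t => kgsEnergy D κ₁ κ₂ μ γ (p t) (q t) (u t) (v t)) 0 t := by
    intro t
    have hp_grad : κ₁ • D *ᵥ q t + (2 * γ) • (u t * q t) = -(2 : ℝ) • deriv p t := by
      rw [hpe]; module
    have hq_grad : κ₁ • D *ᵥ p t + (2 * γ) • (u t * p t) = (2 : ℝ) • deriv q t := by
      rw [hqe]; module
    convert hasDerivAt_kgsEnergy hD (hp t).hasDerivAt (hq t).hasDerivAt (hu t).hasDerivAt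
      (hv t).hasDerivAt using 1
    rw [hp_grad, hq_grad, ← hve, hue, dotProduct_comm (deriv q t), dotProduct_comm (v t)]
    simp only [dotProduct_smul, smul_dotProduct, smul_eq_mul]
    ring
  exact fun s t => is_const_of_deriv_eq_zero (fun r => (hE r).differentiableAt)
    (fun r => (hE r).deriv) s t

/-- Energy conservation of the semi-discrete Klein–Gordon–Schrödinger system:
if `(p,q,u,v)` solves the semi-discrete KGS equations with symmetric matrix `D`,
then the semi-discrete energy
`E_h = (1/2)(−κ₁ pᵀDp − κ₁ qᵀDq − κ₂ uᵀDu + vᵀv + μ² uᵀu) − γ (p∘p + q∘q)ᵀ u`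
is constant in time. -/
theorem semidiscrete_KGS_energy_conservation (M : ℕ) (hM : 0 < M)
    (D : Matrix (Fin M) (Fin M) ℝ) (hD : D.transpose = D)
    (κ₁ κ₂ μ γ : ℝ)
    (p q u v : ℝ → (Fin M → ℝ))
    (hp : Differentiable ℝ p) (hq : Differentiable ℝ q)
    (hu : Differentiable ℝ u) (hv : Differentiable ℝ v)
    (hpe : ∀ t, deriv p t = -(κ₁ / 2) • D.mulVec (q t) - γ • (u t * q t))
    (hqe : ∀ t, deriv q t = (κ₁ / 2) • D.mulVec (p t) + γ • (u t * p t))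
    (hue : ∀ t, deriv u t = v t)
    (hve : ∀ t, deriv v t = κ₂ • D.mulVec (u t) - (μ ^ 2) • u t + γ • (p t * p t + q t * q t)) :
    ∀ s t : ℝ,
      (1 / 2) * (-(κ₁ * (p s ⬝ᵥ D.mulVec (p s))) - κ₁ * (q s ⬝ᵥ D.mulVec (q s))
          - κ₂ * (u s ⬝ᵥ D.mulVec (u s)) + v s ⬝ᵥ v s + μ ^ 2 * (u s ⬝ᵥ u s))
        - γ * ((p s * p s + q s * q s) ⬝ᵥ u s)
      = (1 / 2) * (-(κ₁ * (p t ⬝ᵥ D.mulVec (p t))) - κ₁ * (q t ⬝ᵥ D.mulVec (q t))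
          - κ₂ * (u t ⬝ᵥ D.mulVec (u t)) + v t ⬝ᵥ v t + μ ^ 2 * (u t ⬝ᵥ u t))
        - γ * ((p t * p t + q t * q t) ⬝ᵥ u t) :=
  semidiscrete_KGS_energy_conservation_general M D hD κ₁ κ₂ μ γ p q u v hp hq hu hv hpe hqe hue hve
end

section
/- Let n be a positive integer, H : ℝⁿ → ℝ continuously differentiable, J an n × n real skew-symmetric matrix, and τ a real number. If Y, Ŷ ∈ ℝⁿ satisfy the averaged vector field (AVF) method Ŷ − Y = τ · J · (∫₀¹ ∇H(θŶ + (1−θ)Y) dθ), then the AVF method conserves the energy: H(Ŷ) = H(Y). -/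
/-!
By the fundamental theorem of calculus along the segment from `Y` to `Ŷ`,
`H Ŷ - H Y = (Ŷ - Y) ⬝ᵥ g`, where `g` is the averaged gradient of the scheme.
The scheme gives `Ŷ - Y = τ • J *ᵥ g`, and `J *ᵥ g ⬝ᵥ g = 0` because `J` is skew-symmetric.
-/

open Matrix

theorem Matrix.mulVec_dotProduct_self_eq_zero_of_transpose_eq_neg {ι R : Type*} [Fintype ι]
    [CommRing R] [IsAddTorsionFree R] {J : Matrix ι ι R} (hJ : Jᵀ = -J) (v : ι → R) :
    J *ᵥ v ⬝ᵥ v = 0 := by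
  have : J *ᵥ v ⬝ᵥ v = -(J *ᵥ v ⬝ᵥ v) := by
    rw [← neg_dotProduct, ← neg_mulVec, ← hJ, mulVec_transpose, dotProduct_comm, dotProduct_mulVec]
  exact self_eq_neg.mp this

theorem LinearMap.apply_eq_dotProduct_single {ι R : Type*} [Fintype ι] [DecidableEq ι]
    [CommSemiring R] (f : (ι → R) →ₗ[R] R) (v : ι → R) :
    f v = v ⬝ᵥ fun j => f (Pi.single j 1) := by
  conv_lhs => rw [← Finset.univ_sum_single v]
  refine (map_sum f _ _).trans (Finset.sum_congr rfl fun j _ => ?_)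
  rw [← smul_eq_mul, ← map_smul, ← Pi.single_smul', smul_eq_mul, mul_one]

theorem intervalIntegral_apply_eq_dotProduct_single {ι : Type*} [Fintype ι] [DecidableEq ι]
    {L : ℝ → (ι → ℝ) →L[ℝ] ℝ} {a b : ℝ} (hL : IntervalIntegrable L MeasureTheory.volume a b)
    (v : ι → ℝ) :
    ∫ θ in a..b, L θ v = v ⬝ᵥ fun j => ∫ θ in a..b, L θ (Pi.single j 1) := by
  simp_rw [← ContinuousLinearMap.intervalIntegral_apply hL]
  exact (∫ θ in a..b, L θ).toLinearMap.apply_eq_dotProduct_single v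

theorem ContDiff.sub_eq_integral_fderiv_segment {E F : Type*} [NormedAddCommGroup E]
    [NormedSpace ℝ E] [NormedAddCommGroup F] [NormedSpace ℝ F] [CompleteSpace F] {f : E → F}
    (hf : ContDiff ℝ 1 f) (a b : E) :
    f b - f a = ∫ θ in (0:ℝ)..1, fderiv ℝ f (θ • b + (1 - θ) • a) (b - a) := by
  have hsegment (θ : ℝ) : HasDerivAt (fun t : ℝ => t • b + (1 - t) • a) (b - a) θ := by
    convert ((hasDerivAt_id θ).smul_const b).add
      (((hasDerivAt_const θ (1 : ℝ)).sub (hasDerivAt_id θ)).smul_const a) using 1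
    · rfl
    · module
  have hcont : Continuous fun θ : ℝ => fderiv ℝ f (θ • b + (1 - θ) • a) (b - a) := by
    have := hf.continuous_fderiv one_ne_zero
    fun_prop
  rw [intervalIntegral.integral_eq_sub_of_hasDerivAt
    (fun θ _ => ((hf.differentiable one_ne_zero) _).hasFDerivAt.comp_hasDerivAt θ (hsegment θ))
    (hcont.intervalIntegrable 0 1)]
  simp

theorem avf_energy_conservation_general (n : ℕ)
    (H : (Fin n → ℝ) → ℝ) (hH : ContDiff ℝ 1 H)
    (J : Matrix (Fin n) (Fin n) ℝ) (hJ : J.transpose = -J)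
    (τ : ℝ) (Y Yh : Fin n → ℝ)
    (hstep : Yh - Y = τ • J.mulVec
      (fun j => ∫ θ in (0:ℝ)..1, fderiv ℝ H (θ • Yh + (1 - θ) • Y) (Pi.single j 1))) :
    H Yh = H Y := by
  have hintegrable : IntervalIntegrable (fun θ : ℝ => fderiv ℝ H (θ • Yh + (1 - θ) • Y))
      MeasureTheory.volume 0 1 :=
    ((hH.continuous_fderiv one_ne_zero).comp (by fun_prop)).intervalIntegrable 0 1
  rw [← sub_eq_zero, hH.sub_eq_integral_fderiv_segment,
    intervalIntegral_apply_eq_dotProduct_single hintegrable, hstep, smul_dotProduct,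
    mulVec_dotProduct_self_eq_zero_of_transpose_eq_neg hJ, smul_zero]

/-- Energy conservation of the averaged vector field (AVF) method: if
`Ŷ − Y = τ J ∫₀¹ ∇H(θŶ + (1−θ)Y) dθ` with `J` skew-symmetric, then `H(Ŷ) = H(Y)`. -/
theorem avf_energy_conservation (n : ℕ) (hn : 0 < n)
    (H : (Fin n → ℝ) → ℝ) (hH : ContDiff ℝ 1 H)
    (J : Matrix (Fin n) (Fin n) ℝ) (hJ : J.transpose = -J)
    (τ : ℝ) (Y Yh : Fin n → ℝ)
    (hstep : Yh - Y = τ • J.mulVec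
      (fun j => ∫ θ in (0:ℝ)..1, fderiv ℝ H (θ • Yh + (1 - θ) • Y) (Pi.single j 1))) :
    H Yh = H Y :=
  avf_energy_conservation_general n H hH J hJ τ Y Yh hstep
end

section
/- Let n be a positive integer and H : (Fin n → ℝ) → ℝ continuously differentiable. Given y, ŷ : Fin n → ℝ, for each index i define the grid-point-partitioned AVF discrete gradient component Ḡᵢ = ∫₀¹ ∂ᵢH(zᵢ(θ)) dθ, where zᵢ(θ) is the vector whose j-th coordinate equals ŷⱼ for j < i, equals θŷᵢ + (1−θ)yᵢ for j = i, and equals yⱼ for j > i. Then the telescoping discrete-gradient identity holds: Σᵢ Ḡᵢ · (ŷᵢ − yᵢ) = H(ŷ) − H(y). -/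
/-!
Let `x⁽ᵏ⁾ = updateBelow y ŷ k` be `y` with its first `k` coordinates replaced by those of `ŷ`.
The point `zᵢ(θ)` runs along the segment from `x⁽ⁱ⁾` to `x⁽ⁱ⁺¹⁾ = x⁽ⁱ⁾ + (ŷᵢ - yᵢ) eᵢ`, so by the
fundamental theorem of calculus `Ḡᵢ (ŷᵢ - yᵢ) = H(x⁽ⁱ⁺¹⁾) - H(x⁽ⁱ⁾)`, and the sum over `i` telescopes from
`H(x⁽⁰⁾) = H(y)` to `H(x⁽ⁿ⁾) = H(ŷ)`.
-/

open Finset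

theorem ContDiff.integral_fderiv_add_smul {E F : Type*} [NormedAddCommGroup E] [NormedSpace ℝ E]
    [NormedAddCommGroup F] [NormedSpace ℝ F] [CompleteSpace F] {f : E → F}
    (hf : ContDiff ℝ 1 f) (x v : E) :
    ∫ θ in (0:ℝ)..1, fderiv ℝ f (x + θ • v) v = f (x + v) - f x := by
  have h := map_add_eq_sum_add_integral_iteratedFDeriv (n := 0) (x := x) (y := v)
    fun _ _ => hf.contDiffAt
  simp [h, iteratedFDeriv_one_apply]

section UpdateBelow

variable {n : ℕ} {α : Type*}

def updateBelow (y yh : Fin n → α) (k : ℕ) : Fin n → α :=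
  fun j => if (j : ℕ) < k then yh j else y j

theorem updateBelow_zero (y yh : Fin n → α) : updateBelow y yh 0 = y := by
  funext j
  simp [updateBelow]

theorem updateBelow_self (y yh : Fin n → α) : updateBelow y yh n = yh := by
  funext j
  simp [updateBelow]

theorem updateBelow_succ {M : Type*} [AddCommGroup M] (y yh : Fin n → M) (i : Fin n) :
    updateBelow y yh (i + 1) = updateBelow y yh i + Pi.single i (yh i - y i) := by
  funext j
  rcases lt_trichotomy j i with hji | rfl | hij
  · simp [updateBelow, hji, hji.ne, Nat.lt_succ_of_lt (Fin.lt_def.mp hji)]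
  · simp [updateBelow]
  · simp [updateBelow, hij.ne', Nat.not_lt.mpr (Nat.succ_le_of_lt (Fin.lt_def.mp hij)),
      Nat.not_lt.mpr (Fin.le_def.mp hij.le)]

theorem avf_interpolant_eq {R : Type*} [CommRing R] (y yh : Fin n → R) (i : Fin n) (θ : R) :
    (fun j => if j < i then yh j else if j = i then θ * yh i + (1 - θ) * y i else y j) =
      updateBelow y yh i + θ • Pi.single i (yh i - y i) := by
  funext j
  rcases lt_trichotomy j i with hji | rfl | hij
  · simp [updateBelow, hji, hji.ne]
  · simp [updateBelow]
    ring
  · simp [updateBelow, hij.ne', not_lt.mpr hij.le, Nat.not_lt.mpr (Fin.le_def.mp hij.le)]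

theorem integral_fderiv_updateBelow_mul {H : (Fin n → ℝ) → ℝ} (hH : ContDiff ℝ 1 H)
    (y yh : Fin n → ℝ) (i : Fin n) :
    (∫ θ in (0:ℝ)..1,
        fderiv ℝ H (updateBelow y yh i + θ • Pi.single i (yh i - y i)) (Pi.single i 1)) *
        (yh i - y i) =
      H (updateBelow y yh (i + 1)) - H (updateBelow y yh i) := by
  have hsingle : Pi.single i (yh i - y i) = (yh i - y i) • (Pi.single i 1 : Fin n → ℝ) := by
    rw [← Pi.single_smul', smul_eq_mul, mul_one]
  rw [mul_comm, ← intervalIntegral.integral_const_mul]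
  simp_rw [← smul_eq_mul (yh i - y i), ← map_smul, ← hsingle]
  rw [hH.integral_fderiv_add_smul, updateBelow_succ]

end UpdateBelow

theorem gridpoint_avf_telescoping_general (n : ℕ)
    (H : (Fin n → ℝ) → ℝ) (hH : ContDiff ℝ 1 H)
    (y yh : Fin n → ℝ) :
    ∑ i : Fin n,
        (∫ θ in (0:ℝ)..1,
          fderiv ℝ H
            (fun j => if j < i then yh j
              else if j = i then θ * yh i + (1 - θ) * y i
              else y j)
            (Pi.single i 1)) * (yh i - y i)
      = H yh - H y := by
  simp_rw [avf_interpolant_eq, integral_fderiv_updateBelow_mul hH]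
  rw [Fin.sum_univ_eq_sum_range (fun k => H (updateBelow y yh (k + 1)) - H (updateBelow y yh k)),
    sum_range_sub (fun k => H (updateBelow y yh k)), updateBelow_self, updateBelow_zero]

/-- Telescoping discrete-gradient identity of the grid-point-partitioned AVF method:
with `zᵢ(θ)` interpolating coordinate `i` and carrying new values `ŷⱼ` for `j < i` and
old values `yⱼ` for `j > i`, one has `Σᵢ (∫₀¹ ∂ᵢH(zᵢ(θ)) dθ)(ŷᵢ − yᵢ) = H(ŷ) − H(y)`. -/
theorem gridpoint_avf_telescoping (n : ℕ) (hn : 0 < n)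
    (H : (Fin n → ℝ) → ℝ) (hH : ContDiff ℝ 1 H)
    (y yh : Fin n → ℝ) :
    ∑ i : Fin n,
        (∫ θ in (0:ℝ)..1,
          fderiv ℝ H
            (fun j => if j < i then yh j
              else if j = i then θ * yh i + (1 - θ) * y i
              else y j)
            (Pi.single i 1)) * (yh i - y i)
      = H yh - H y :=
  gridpoint_avf_telescoping_general n H hH y yh
end

section
/- Let n be a positive integer, H : (Fin n → ℝ) → ℝ continuously differentiable, and σ : Fin n ≃ Fin n a permutation (an update ordering of the coordinates). Given Y, Ŷ : Fin n → ℝ, for each k : Fin n define the dual-partition AVF discrete gradient component at coordinate σ(k) by Ḡ_{σ(k)} = ∫₀¹ ∂_{σ(k)}H(Z_k(θ)) dθ, where Z_k(θ) is the vector whose σ(j)-th coordinate equals Ŷ_{σ(j)} for j < k, equals θŶ_{σ(k)} + (1−θ)Y_{σ(k)} for j = k, and equals Y_{σ(j)} for j > k. Then Ḡ is a discrete gradient of H: Σ_k Ḡ_{σ(k)} · (Ŷ_{σ(k)} − Y_{σ(k)}) = H(Ŷ) − H(Y). -/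
/-!
Order the coordinates by `σ` and pass from `Y` to `Ŷ` by changing one coordinate at a time:
after `t` steps the coordinates `σ 0, …, σ (t-1)` carry the new values. On step `k` the
path `Z_k` moves along the segment from the `k`-th to the `(k+1)`-th intermediate point,
so by the fundamental theorem of calculus the `k`-th summand is the increment of `H` along
that step, and the sum telescopes to `H Ŷ - H Y`.
-/

open Finset

theorem integral_fderiv_segment_eq_sub {E F : Type*} [NormedAddCommGroup E] [NormedSpace ℝ E]
    [NormedAddCommGroup F] [NormedSpace ℝ F] [CompleteSpace F] {H : E → F}
    (hH : ContDiff ℝ 1 H) (x v : E) :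
    ∫ θ in (0:ℝ)..1, fderiv ℝ H (x + θ • v) v = H (x + v) - H x := by
  have hpath : ∀ θ : ℝ, HasDerivAt (fun t : ℝ => x + t • v) v θ := fun θ => by
    simpa using ((hasDerivAt_id θ).smul_const v).const_add x
  have hderiv : ∀ θ ∈ Set.uIcc (0:ℝ) 1,
      HasDerivAt (fun t : ℝ => H (x + t • v)) (fderiv ℝ H (x + θ • v) v) θ := fun θ _ =>
    ((hH.differentiable one_ne_zero) _).hasFDerivAt.comp_hasDerivAt θ (hpath θ)
  have hcont : Continuous fun θ : ℝ => fderiv ℝ H (x + θ • v) v :=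
    ((hH.continuous_fderiv one_ne_zero).comp (by fun_prop)).clm_apply continuous_const
  simpa using intervalIntegral.integral_eq_sub_of_hasDerivAt hderiv (hcont.intervalIntegrable 0 1)

theorem integral_fderiv_single_mul_eq_sub {ι : Type*} [Fintype ι] [DecidableEq ι]
    {H : (ι → ℝ) → ℝ} (hH : ContDiff ℝ 1 H) (x : ι → ℝ) (i : ι) (c : ℝ) :
    (∫ θ in (0:ℝ)..1, fderiv ℝ H (x + θ • Pi.single i c) (Pi.single i 1)) * c
      = H (x + Pi.single i c) - H x := by
  have hsingle : (Pi.single i c : ι → ℝ) = c • Pi.single i 1 := by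
    rw [← Pi.single_smul, smul_eq_mul, mul_one]
  rw [← integral_fderiv_segment_eq_sub hH, ← intervalIntegral.integral_mul_const]
  congr 1 with θ
  rw [hsingle, map_smul, smul_eq_mul, mul_comm]

section PartialUpdate

variable {n : ℕ} {α : Type*}

def partialUpdate (σ : Equiv.Perm (Fin n)) (Y Yh : Fin n → α) (t : ℕ) : Fin n → α :=
  fun m => if (σ.symm m : ℕ) < t then Yh m else Y m

variable (σ : Equiv.Perm (Fin n)) (Y Yh : Fin n → α)

@[simp]
theorem partialUpdate_zero : partialUpdate σ Y Yh 0 = Y := by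
  funext m; simp [partialUpdate]

@[simp]
theorem partialUpdate_self : partialUpdate σ Y Yh n = Yh := by
  funext m; simp [partialUpdate]

theorem partialUpdate_succ [AddCommGroup α] (k : Fin n) :
    partialUpdate σ Y Yh (k + 1)
      = partialUpdate σ Y Yh k + Pi.single (σ k) (Yh (σ k) - Y (σ k)) := by
  funext m
  rcases eq_or_ne m (σ k) with rfl | hm
  · simp [partialUpdate]
  · have hk : (σ.symm m : ℕ) ≠ k := fun h => hm (by simp [← Fin.ext h])
    simp only [partialUpdate, Pi.add_apply, Pi.single_eq_of_ne hm, add_zero]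
    have hlt : (σ.symm m : ℕ) < k + 1 ↔ (σ.symm m : ℕ) < k := by omega
    simp only [hlt]

end PartialUpdate

theorem interpolate_eq_partialUpdate_add {n : ℕ} (σ : Equiv.Perm (Fin n)) (Y Yh : Fin n → ℝ)
    (k : Fin n) (θ : ℝ) :
    (fun m => if σ.symm m < k then Yh m
      else if σ.symm m = k then θ * Yh m + (1 - θ) * Y m
      else Y m)
      = partialUpdate σ Y Yh k + θ • Pi.single (σ k) (Yh (σ k) - Y (σ k)) := by
  funext m
  rcases eq_or_ne m (σ k) with rfl | hm
  · simp only [Equiv.symm_apply_apply, lt_self_iff_false, ↓reduceIte, Pi.add_apply, partialUpdate,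
      Pi.smul_apply, Pi.single_eq_same, smul_eq_mul]
    ring
  · have hk : σ.symm m ≠ k := fun h => hm (by simp [← h])
    simp [partialUpdate, hk, Pi.single_eq_of_ne hm]

theorem dual_partition_avf_discrete_gradient_general (n : ℕ)
    (H : (Fin n → ℝ) → ℝ) (hH : ContDiff ℝ 1 H)
    (σ : Equiv.Perm (Fin n))
    (Y Yh : Fin n → ℝ) :
    ∑ k : Fin n,
        (∫ θ in (0:ℝ)..1,
          fderiv ℝ H
            (fun m => if σ.symm m < k then Yh m
              else if σ.symm m = k then θ * Yh m + (1 - θ) * Y m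
              else Y m)
            (Pi.single (σ k) 1)) * (Yh (σ k) - Y (σ k))
      = H Yh - H Y := by
  calc _ = ∑ k : Fin n, (H (partialUpdate σ Y Yh (k + 1)) - H (partialUpdate σ Y Yh k)) := by
        refine sum_congr rfl fun k _ => ?_
        simp_rw [interpolate_eq_partialUpdate_add, partialUpdate_succ]
        exact integral_fderiv_single_mul_eq_sub hH _ _ _
    _ = H (partialUpdate σ Y Yh n) - H (partialUpdate σ Y Yh 0) := by
        rw [Fin.sum_univ_eq_sum_range (fun i => H (partialUpdate σ Y Yh (i + 1)) -
          H (partialUpdate σ Y Yh i)), sum_range_sub (fun i => H (partialUpdate σ Y Yh i))]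
    _ = H Yh - H Y := by simp

/-- Lemma 1 of the paper: the dual-partition AVF vector field is a discrete gradient.
For any update ordering `σ` of the coordinates, with `Z_k(θ)` carrying new values at
coordinates updated before position `k`, the interpolated value at position `k`, and
old values after position `k`, one has
`Σ_k Ḡ_{σ(k)} (Ŷ_{σ(k)} − Y_{σ(k)}) = H(Ŷ) − H(Y)`. -/
theorem dual_partition_avf_discrete_gradient (n : ℕ) (hn : 0 < n)
    (H : (Fin n → ℝ) → ℝ) (hH : ContDiff ℝ 1 H)
    (σ : Equiv.Perm (Fin n))
    (Y Yh : Fin n → ℝ) :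
    ∑ k : Fin n,
        (∫ θ in (0:ℝ)..1,
          fderiv ℝ H
            (fun m => if σ.symm m < k then Yh m
              else if σ.symm m = k then θ * Yh m + (1 - θ) * Y m
              else Y m)
            (Pi.single (σ k) 1)) * (Yh (σ k) - Y (σ k))
      = H Yh - H Y :=
  dual_partition_avf_discrete_gradient_general n H hH σ Y Yh
end
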